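/- Let M = M_{p^α, bp^α} be a local singular ACM with α = β > 1. Then the catenary degree of M is 3. -/

import Mathlib

/-- Membership in the arithmetical congruence monoid `M_{a,b} = (a + b ℕ₀) ∪ {1}`. -/
def acmMem (a b x : ℕ) : Prop := x = 1 ∨ ∃ k : ℕ, x = a + k * b

/-- `x` is an atom (irreducible) of `M_{a,b}`. -/
def acmAtom (a b x : ℕ) : Prop :=
  acmMem a b x ∧ x ≠ 1 ∧
    ∀ y z : ℕ, acmMem a b y → acmMem a b z → x = y * z → y = 1 ∨ z = 1

/-- `s` is a factorization of `x` into atoms of `M_{a,b}`. -/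
def acmFactorization (a b x : ℕ) (s : Multiset ℕ) : Prop :=
  (∀ u ∈ s, acmAtom a b u) ∧ s.prod = x

/-- The distance between two factorizations. -/
def facDist (s t : Multiset ℕ) : ℕ := max (Multiset.card (s - t)) (Multiset.card (t - s))

/-- There is an `N`-chain of factorizations of `x` from `z₁` to `z₂` in `M_{a,b}`. -/
def acmNChain (a b x N : ℕ) (z₁ z₂ : Multiset ℕ) : Prop :=
  ∃ L : List (Multiset ℕ), L ≠ [] ∧ L.head? = some z₁ ∧ L.getLast? = some z₂ ∧
    (∀ z ∈ L, acmFactorization a b x z) ∧ L.Chain' (fun s t => facDist s t ≤ N)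

/-- The set of `N` such that any two factorizations of any element of `M_{a,b}`
are connected by an `N`-chain; `c(M) = n` iff `n` is the least element of this set. -/
def acmCatSet (a b : ℕ) : Set ℕ :=
  {N | ∀ x, acmMem a b x → ∀ z₁ z₂, acmFactorization a b x z₁ →
      acmFactorization a b x z₂ → acmNChain a b x N z₁ z₂}

/-- Divisibility inside the monoid `M_{a,b}`. -/
def acmDvd (a b x y : ℕ) : Prop := ∃ k, acmMem a b k ∧ x * k = y

/-- `s` is a bullet of `x` in `M_{a,b}`. -/
def acmBullet (a b x : ℕ) (s : Multiset ℕ) : Prop :=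
  (∀ u ∈ s, acmAtom a b u) ∧ acmDvd a b x s.prod ∧
    ∀ t : Multiset ℕ, t ≤ s → t ≠ s → ¬ acmDvd a b x t.prod

/-- Omega primality of `x` in `M_{a,b}`: the sup of the lengths of bullets of `x`. -/
noncomputable def acmOmega (a b x : ℕ) : ℕ∞ :=
  sSup {n : ℕ∞ | ∃ s : Multiset ℕ, acmBullet a b x s ∧ (Multiset.card s : ℕ∞) = n}

/-- The set of factorization lengths of `x` in `M_{a,b}`. -/
def acmLengthSet (a b x : ℕ) : Set ℕ :=
  {n | ∃ s : Multiset ℕ, acmFactorization a b x s ∧ Multiset.card s = n}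

/-- `x` has at least two distinct factorization lengths. -/
def acmLI (a b x : ℕ) : Prop := ∃ m ∈ acmLengthSet a b x, ∃ n ∈ acmLengthSet a b x, m ≠ n

/-- The length density of an element `x` of `M_{a,b}`. -/
noncomputable def acmLD (a b x : ℕ) : ℝ :=
  (((acmLengthSet a b x).ncard : ℝ) - 1) /
    (((sSup (acmLengthSet a b x) : ℕ) : ℝ) - ((sInf (acmLengthSet a b x) : ℕ) : ℝ))

/-!
Since `p ^ α ≡ 1 [MOD b]`, the monoid is `{1} ∪ p ^ α (1 + b ℕ)` and its atoms are exactly the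
numbers `p ^ (α + i) * n` with `i < α`, `p ∤ n` and `p ^ i * n ≡ 1 [MOD b]`. Two atoms can be
refactored, by a single step of distance at most 3, into a *carrier* atom `p ^ (α + j) * n₁ n₂`,
with `j` least such that `p ^ j * n₁ n₂ ≡ 1 [MOD b]`, times one or two pure powers `p ^ (α + e)`.
Merging atoms with nontrivial `p`-free part until at most one is left, every factorization of
length at least 2 of `x` is 3-connected to one containing the carrier of the `p`-free part of `x`;
so any two factorizations are 3-connected, by induction on `x`.
Conversely `(p ^ (2α - 1) (p + b)) ^ 2 = p ^ α · p ^ α · p ^ (2α - 2) (p + b) ^ 2` has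
factorizations of lengths 2 and 3, while steps of distance at most 2 preserve length.
-/

open Relation Multiset

theorem Multiset.exists_eq_cons_and_or_forall_not {β : Type*} (P : β → Prop) {z : Multiset β}
    (hz : z ≠ 0) :
    ∃ u s, z = u ::ₘ s ∧ (P u ∨ ∀ w ∈ s, ¬ P w) := by
  by_cases h : ∃ u ∈ z, P u
  · obtain ⟨u, hu, hPu⟩ := h
    obtain ⟨s, rfl⟩ := exists_cons_of_mem hu
    exact ⟨u, s, rfl, .inl hPu⟩
  · push Not at h
    obtain ⟨u, hu⟩ := exists_mem_of_ne_zero hz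
    obtain ⟨s, rfl⟩ := exists_cons_of_mem hu
    exact ⟨u, s, rfl, .inr fun w hw => h w (mem_cons_of_mem hw)⟩

theorem Multiset.exists_eq_cons_cons_of_two_le {β : Type*} (P : β → Prop) {z : Multiset β}
    (hz : 2 ≤ card z) :
    ∃ u v c, z = u ::ₘ v ::ₘ c ∧ ((∀ w ∈ c, ¬ P w) ∨ (P u ∧ P v)) := by
  obtain ⟨u, s, rfl, hu⟩ :=
    exists_eq_cons_and_or_forall_not P (card_pos.mp (by omega : 0 < card z))
  obtain ⟨v, c, rfl, hv⟩ :=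
    exists_eq_cons_and_or_forall_not P (card_pos.mp (by rw [card_cons] at hz; omega : 0 < card s))
  refine ⟨u, v, c, rfl, ?_⟩
  rcases hu with hu | hs
  · rcases hv with hv | hc
    · exact .inr ⟨hu, hv⟩
    · exact .inl hc
  · exact .inl fun w hw => hs w (mem_cons_of_mem hw)

theorem Nat.ordCompl_prod_eq_one {p : ℕ} {s : Multiset ℕ} (h : ∀ w ∈ s, ordCompl[p] w = 1) :
    ordCompl[p] s.prod = 1 :=
  prod_induction (fun n => ordCompl[p] n = 1) s
    (fun m n hm hn => by rw [Nat.ordCompl_mul, hm, hn]) (by simp) h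

theorem Nat.ModEq.modEq_one_of_mul {b c y : ℕ} (hc : c ≡ 1 [MOD b]) (h : c * y ≡ 1 [MOD b]) :
    y ≡ 1 [MOD b] :=
  calc y = 1 * y := (one_mul y).symm
    _ ≡ c * y [MOD b] := hc.symm.mul_right y
    _ ≡ 1 [MOD b] := h

theorem Nat.mul_self_modEq_iff_modEq_one {a b : ℕ} (ha : a ≠ 0) :
    a * a ≡ a [MOD b * a] ↔ a ≡ 1 [MOD b] :=
  ⟨fun h => Nat.ModEq.mul_right_cancel' ha (by rwa [one_mul]),
    fun h => by simpa using h.mul_right' a⟩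

section General

variable {a b x y u N : ℕ} {s t z₁ z₂ : Multiset ℕ}

theorem acmAtom.two_le (h : acmAtom a b x) : 2 ≤ x := by
  obtain ⟨hmem, hne, hirr⟩ := h
  have hx0 : x ≠ 0 := by
    rintro rfl
    rcases hirr 0 0 hmem hmem rfl with h | h <;> exact zero_ne_one h
  omega

theorem acmMem_mul (hab : a * a ≡ a [MOD b]) (hx : acmMem a b x) (hy : acmMem a b y) :
    acmMem a b (x * y) := by
  rcases hx with rfl | ⟨k, rfl⟩
  · simpa using hy
  rcases hy with rfl | ⟨l, rfl⟩
  · rw [mul_one]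
    exact .inr ⟨k, rfl⟩
  obtain ⟨c, hc⟩ : b ∣ a * a - a := (Nat.modEq_iff_dvd' (Nat.le_mul_self a)).mp hab.symm
  have hsq : a * a = a + c * b := by
    rw [mul_comm c b, ← hc, Nat.add_sub_cancel' (Nat.le_mul_self a)]
  exact .inr ⟨c + k * a + l * a + k * l * b, by linear_combination hsq⟩

theorem acmMem_prod (hab : a * a ≡ a [MOD b]) (hs : ∀ u ∈ s, acmMem a b u) :
    acmMem a b s.prod :=
  prod_induction _ s (fun _ _ => acmMem_mul hab) (.inl rfl) hs

theorem acmFactorization.pos (h : acmFactorization a b x s) : 0 < x :=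
  h.2 ▸ prod_pos fun u hu => by have := (h.1 u hu).two_le; omega

theorem acmFactorization.eq_zero_of_one (h : acmFactorization a b 1 s) : s = 0 :=
  eq_zero_of_forall_notMem fun u hu => by
    have h2 := (h.1 u hu).two_le
    have : u = 1 := Nat.dvd_one.mp (h.2 ▸ dvd_prod hu)
    omega

theorem acmFactorization.cons (hu : acmAtom a b u) (hs : acmFactorization a b y s) :
    acmFactorization a b (u * y) (u ::ₘ s) :=
  ⟨fun w hw => (mem_cons.mp hw).elim (· ▸ hu) (hs.1 w), by rw [prod_cons, hs.2]⟩

theorem acmFactorization.div_of_cons (h : acmFactorization a b x (u ::ₘ s)) :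
    acmFactorization a b (x / u) s := by
  have hu := (h.1 u (mem_cons_self u s)).two_le
  refine ⟨fun w hw => h.1 w (mem_cons_of_mem hw), ?_⟩
  rw [← h.2, prod_cons, Nat.mul_div_cancel_left _ (by omega)]

theorem acmFactorization.eq_of_card_le_one (hab : a * a ≡ a [MOD b])
    (h₁ : acmFactorization a b x z₁) (hcard : card z₁ ≤ 1)
    (h₂ : acmFactorization a b x z₂) :
    z₂ = z₁ := by
  rcases Nat.le_one_iff_eq_zero_or_eq_one.mp hcard with h | h
  · obtain rfl := card_eq_zero.mp h
    obtain rfl : x = 1 := by simpa using h₁.2.symm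
    exact h₂.eq_zero_of_one
  obtain ⟨y, rfl⟩ := card_eq_one.mp h
  obtain rfl : y = x := by simpa using h₁.2
  have hy := h₁.1 y (mem_singleton_self y)
  rcases eq_or_ne z₂ 0 with rfl | hz₂
  · have := hy.two_le
    simp [← h₂.2] at this
  obtain ⟨u, hu⟩ := exists_mem_of_ne_zero hz₂
  obtain ⟨s, rfl⟩ := exists_cons_of_mem hu
  have hu' := h₂.1 u hu
  have hs : acmFactorization a b s.prod s := ⟨fun w hw => h₂.1 w (mem_cons_of_mem hw), rfl⟩
  rcases hy.2.2 u s.prod hu'.1 (acmMem_prod hab fun w hw => (hs.1 w hw).1)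
      (by rw [← h₂.2, prod_cons]) with h1 | h1
  · exact absurd h1 hu'.2.1
  · rw [h1] at hs
    rw [hs.eq_zero_of_one] at h₂ ⊢
    simpa using h₂.2

theorem facDist_comm (s t : Multiset ℕ) : facDist s t = facDist t s := max_comm _ _

theorem facDist_cons (u : ℕ) (s t : Multiset ℕ) :
    facDist (u ::ₘ s) (u ::ₘ t) = facDist s t := by
  rw [facDist, facDist, ← singleton_add, ← singleton_add u t, add_tsub_add_eq_tsub_left,
    add_tsub_add_eq_tsub_left]

theorem facDist_add_right_le (s t c : Multiset ℕ) :
    facDist (s + c) (t + c) ≤ max (card s) (card t) := by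
  simp only [facDist, add_tsub_add_eq_tsub_right]
  exact max_le_max (card_le_card tsub_le_self) (card_le_card tsub_le_self)

theorem card_eq_of_facDist_lt_three (hab : a * a ≡ a [MOD b]) (hs : acmFactorization a b x s)
    (ht : acmFactorization a b x t) (hd : facDist s t < 3) : card s = card t := by
  have hs' : s - t + s ∩ t = s := sub_add_inter s t
  have ht' : t - s + s ∩ t = t := by rw [inter_comm]; exact sub_add_inter t s
  have hi : (s ∩ t).prod ≠ 0 := by
    refine (prod_pos fun u hu => ?_).ne'
    have := (hs.1 u (mem_of_le inter_le_left hu)).two_le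
    omega
  have hfs : acmFactorization a b (s - t).prod (s - t) :=
    ⟨fun u hu => hs.1 u (mem_of_le tsub_le_self hu), rfl⟩
  have hft : acmFactorization a b (s - t).prod (t - s) := by
    refine ⟨fun u hu => ht.1 u (mem_of_le tsub_le_self hu), ?_⟩
    refine Nat.eq_of_mul_eq_mul_right (Nat.pos_of_ne_zero hi) ?_
    rw [← prod_add, ← prod_add, hs', ht', hs.2, ht.2]
  have hcard : card (s - t) = card (t - s) := by
    rcases le_or_gt (card (s - t)) 1 with h | h
    · rw [hfs.eq_of_card_le_one hab h hft]
    rcases le_or_gt (card (t - s)) 1 with h' | h'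
    · rw [hft.eq_of_card_le_one hab h' hfs]
    · simp only [facDist, max_lt_iff] at hd
      omega
  have hcs := congrArg card hs'
  have hct := congrArg card ht'
  rw [card_add] at hcs hct
  omega

def acmStep (a b x N : ℕ) (s t : Multiset ℕ) : Prop :=
  acmFactorization a b x s ∧ acmFactorization a b x t ∧ facDist s t ≤ N

instance : Std.Symm (acmStep a b x N) where
  symm _ _ h := ⟨h.2.1, h.1, facDist_comm _ _ ▸ h.2.2⟩

theorem acmNChain_iff :
    acmNChain a b x N z₁ z₂ ↔
      acmFactorization a b x z₁ ∧ ReflTransGen (acmStep a b x N) z₁ z₂ := by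
  constructor
  · rintro ⟨L, hne, hhd, hlast, hfac, hchain⟩
    have hhd' : L.head hne = z₁ := (List.head_eq_iff_head?_eq_some hne).mpr hhd
    have hlast' : L.getLast hne = z₂ := List.getLast_of_mem_getLast? hlast
    refine ⟨hfac _ (hhd' ▸ List.head_mem hne), hhd' ▸ hlast' ▸ ?_⟩
    refine List.relationReflTransGen_of_exists_isChain L ?_ hne
    exact (List.IsChain.iff_mem.mp hchain).imp
      fun s t ⟨hs, ht, hst⟩ => ⟨hfac s hs, hfac t ht, hst⟩
  · rintro ⟨h₁, h⟩
    obtain ⟨L, hne, hchain, hhd, hlast⟩ := List.exists_isChain_ne_nil_of_relationReflTransGen h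
    refine ⟨L, hne, hhd ▸ List.head?_eq_some_head hne,
      hlast ▸ List.getLast?_eq_some_getLast hne, ?_, hchain.imp fun _ _ h => h.2.2⟩
    exact List.IsChain.induction _ L hchain (fun _ _ h _ => h.2.1) fun _ => hhd ▸ h₁

theorem reflTransGen_acmStep_cons (hu : acmAtom a b u) (hux : u * y = x)
    (h : ReflTransGen (acmStep a b y N) s t) :
    ReflTransGen (acmStep a b x N) (u ::ₘ s) (u ::ₘ t) := by
  subst hux
  refine ReflTransGen.lift (u ::ₘ ·) (fun s t hst => ?_) s t h
  exact ⟨hst.1.cons hu, hst.2.1.cons hu, (facDist_cons u s t).symm ▸ hst.2.2⟩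

theorem card_eq_of_reflTransGen_acmStep (hab : a * a ≡ a [MOD b]) (hN : N < 3)
    (h : ReflTransGen (acmStep a b x N) z₁ z₂) : card z₁ = card z₂ := by
  induction h with
  | refl => rfl
  | tail _ hst ih =>
    exact ih.trans (card_eq_of_facDist_lt_three hab hst.1 hst.2.1 (hst.2.2.trans_lt hN))

theorem three_le_of_mem_acmCatSet (hab : a * a ≡ a [MOD b]) (h₁ : acmFactorization a b x z₁)
    (h₂ : acmFactorization a b x z₂) (hne : card z₁ ≠ card z₂) (hN : N ∈ acmCatSet a b) :
    3 ≤ N := by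
  by_contra! hN3
  have hx : acmMem a b x := h₁.2 ▸ acmMem_prod hab fun u hu => (h₁.1 u hu).1
  have hchain := (acmNChain_iff.mp (hN x hx z₁ z₂ h₁ h₂)).2
  exact hne (card_eq_of_reflTransGen_acmStep hab hN3 hchain)

theorem acmMem_iff_eq_mul :
    acmMem a (b * a) x ↔ x = 1 ∨ ∃ m, 0 < m ∧ m ≡ 1 [MOD b] ∧ x = a * m := by
  refine or_congr_right ⟨?_, ?_⟩
  · rintro ⟨k, rfl⟩
    exact ⟨1 + k * b, by omega, by simp [Nat.ModEq, Nat.add_mul_mod_self_right], by ring⟩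
  · rintro ⟨m, hm0, hm, rfl⟩
    obtain ⟨k, hk⟩ := (Nat.modEq_iff_dvd' hm0).mp hm.symm
    exact ⟨k, by rw [show m = 1 + b * k by omega]; ring⟩

theorem acmAtom_iff_eq_mul (ha : 1 < a) (hab : a ≡ 1 [MOD b]) :
    acmAtom a (b * a) x ↔ ∃ m, m ≡ 1 [MOD b] ∧ ¬ a ∣ m ∧ x = a * m := by
  constructor
  · rintro ⟨hmem, hne, hirr⟩
    obtain ⟨m, hm0, hm, rfl⟩ := (acmMem_iff_eq_mul.mp hmem).resolve_left hne
    refine ⟨m, hm, ?_, rfl⟩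
    rintro ⟨m', rfl⟩
    have hm'0 : 0 < m' := Nat.pos_of_mul_pos_left hm0
    rcases hirr a (a * m') (acmMem_iff_eq_mul.mpr (.inr ⟨1, one_pos, rfl, (mul_one a).symm⟩))
        (acmMem_iff_eq_mul.mpr (.inr ⟨m', hm'0, hab.modEq_one_of_mul hm, rfl⟩)) rfl with h | h
    · omega
    · have : a ≤ a * m' := Nat.le_mul_of_pos_right a hm'0
      omega
  · rintro ⟨m, hm, hdvd, rfl⟩
    have hm0 : 0 < m := Nat.pos_of_ne_zero fun h => hdvd (h ▸ dvd_zero a)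
    refine ⟨acmMem_iff_eq_mul.mpr (.inr ⟨m, hm0, hm, rfl⟩), ?_, fun y z hy hz hyz => ?_⟩
    · have : a ≤ a * m := Nat.le_mul_of_pos_right a hm0
      omega
    rcases acmMem_iff_eq_mul.mp hy with rfl | ⟨m₁, -, -, rfl⟩
    · exact .inl rfl
    rcases acmMem_iff_eq_mul.mp hz with rfl | ⟨m₂, -, -, rfl⟩
    · exact .inr rfl
    exact absurd ⟨m₁ * m₂, Nat.eq_of_mul_eq_mul_left (by omega) (hyz.trans (by ring))⟩ hdvd

end General

section LocalACM

variable {p b α x u v i n : ℕ}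

theorem acmAtom_pow_iff (hp : p.Prime) (hα : 0 < α) (hb1 : p ^ α ≡ 1 [MOD b]) :
    acmAtom (p ^ α) (b * p ^ α) x ↔
      ∃ i n, i < α ∧ ¬ p ∣ n ∧ p ^ i * n ≡ 1 [MOD b] ∧ x = p ^ (α + i) * n := by
  rw [acmAtom_iff_eq_mul (Nat.one_lt_pow hα.ne' hp.one_lt) hb1]
  constructor
  · rintro ⟨m, hm, hdvd, rfl⟩
    have hm0 : m ≠ 0 := fun h => hdvd (h ▸ dvd_zero _)
    refine ⟨m.factorization p, ordCompl[p] m, ?_, Nat.not_dvd_ordCompl hp hm0,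
      by rwa [Nat.ordProj_mul_ordCompl_eq_self], by
        rw [pow_add, mul_assoc, Nat.ordProj_mul_ordCompl_eq_self]⟩
    by_contra! h
    exact hdvd ((hp.pow_dvd_iff_le_factorization hm0).mpr h)
  · rintro ⟨i, n, hi, hn, hc, rfl⟩
    refine ⟨p ^ i * n, hc, fun h => ?_, by rw [pow_add, mul_assoc]⟩
    have h' := (Nat.Coprime.pow_left α (hp.coprime_iff_not_dvd.mpr hn)).dvd_of_dvd_mul_right h
    have := (Nat.pow_dvd_pow_iff_le_right hp.one_lt).mp h'
    omega

theorem acmAtom_pow (hp : p.Prime) (hb1 : p ^ α ≡ 1 [MOD b]) {e : ℕ} (he : e < α)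
    (hpe : p ^ e ≡ 1 [MOD b]) : acmAtom (p ^ α) (b * p ^ α) (p ^ (α + e)) :=
  (acmAtom_pow_iff hp (by omega) hb1).mpr
    ⟨e, 1, he, hp.not_dvd_one, by rwa [mul_one], (mul_one _).symm⟩

noncomputable def minPowExp (p b n : ℕ) : ℕ := sInf {j | p ^ j * n ≡ 1 [MOD b]}

theorem pow_minPowExp_mul_modEq (h : p ^ i * n ≡ 1 [MOD b]) :
    p ^ minPowExp p b n * n ≡ 1 [MOD b] :=
  Nat.sInf_mem (s := {j | p ^ j * n ≡ 1 [MOD b]}) ⟨i, h⟩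

theorem minPowExp_le (h : p ^ i * n ≡ 1 [MOD b]) : minPowExp p b n ≤ i :=
  Nat.sInf_le (s := {j | p ^ j * n ≡ 1 [MOD b]}) h

theorem pow_sub_minPowExp_modEq (h : p ^ i * n ≡ 1 [MOD b]) :
    p ^ (i - minPowExp p b n) ≡ 1 [MOD b] :=
  (pow_minPowExp_mul_modEq h).modEq_one_of_mul
    (by rwa [mul_right_comm, ← pow_add, Nat.add_sub_cancel' (minPowExp_le h)])

theorem minPowExp_lt (hα : 0 < α) (hb1 : p ^ α ≡ 1 [MOD b]) (h : p ^ i * n ≡ 1 [MOD b]) :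
    minPowExp p b n < α := by
  by_contra! hle
  have hsub : p ^ (minPowExp p b n - α) * n ≡ 1 [MOD b] := by
    refine hb1.modEq_one_of_mul ?_
    rw [← mul_assoc, ← pow_add, Nat.add_sub_cancel' hle]
    exact pow_minPowExp_mul_modEq h
  have := minPowExp_le hsub
  omega

noncomputable def acmCarrier (p b α n : ℕ) : ℕ := p ^ (α + minPowExp p b n) * n

theorem acmCarrier_atom (hp : p.Prime) (hα : 0 < α) (hb1 : p ^ α ≡ 1 [MOD b]) (hn : ¬ p ∣ n)
    (h : p ^ i * n ≡ 1 [MOD b]) : acmAtom (p ^ α) (b * p ^ α) (acmCarrier p b α n) :=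
  (acmAtom_pow_iff hp hα hb1).mpr
    ⟨_, n, minPowExp_lt hα hb1 h, hn, pow_minPowExp_mul_modEq h, rfl⟩

theorem exists_pure_acmFactorization (hp : p.Prime) (hb1 : p ^ α ≡ 1 [MOD b]) {e : ℕ}
    (he : e < 2 * α) (hpe : p ^ e ≡ 1 [MOD b]) :
    ∃ t : Multiset ℕ, 1 ≤ card t ∧ card t ≤ 2 ∧
      (∀ w ∈ t, acmAtom (p ^ α) (b * p ^ α) w ∧ ordCompl[p] w = 1) ∧
      t.prod = p ^ (α + e) := by
  have hpure : ∀ {e}, e < α → p ^ e ≡ 1 [MOD b] →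
      acmAtom (p ^ α) (b * p ^ α) (p ^ (α + e)) ∧ ordCompl[p] (p ^ (α + e)) = 1 :=
    fun he hpe => ⟨acmAtom_pow hp hb1 he hpe, Nat.ordCompl_self_pow hp⟩
  rcases lt_or_ge e α with h | h
  · exact ⟨{p ^ (α + e)}, by simp, by simp, by simpa using hpure h hpe, prod_singleton _⟩
  · have hpe' : p ^ (e - α) ≡ 1 [MOD b] :=
      hb1.modEq_one_of_mul (by rwa [← pow_add, Nat.add_sub_cancel' h])
    refine ⟨{p ^ (α + (e - α)), p ^ (α + 0)}, by simp, by simp, ?_, ?_⟩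
    · simp only [insert_eq_cons, mem_cons, mem_singleton, forall_eq_or_imp, forall_eq]
      exact ⟨hpure (by omega) hpe', hpure (by omega) rfl⟩
    · rw [insert_eq_cons, prod_cons, prod_singleton, ← pow_add]
      congr 1
      omega

theorem exists_mul_eq_acmCarrier_mul_prod (hp : p.Prime) (hα : 0 < α)
    (hb1 : p ^ α ≡ 1 [MOD b]) (hu : acmAtom (p ^ α) (b * p ^ α) u)
    (hv : acmAtom (p ^ α) (b * p ^ α) v) :
    ∃ t : Multiset ℕ, 1 ≤ card t ∧ card t ≤ 2 ∧
      (∀ w ∈ t, acmAtom (p ^ α) (b * p ^ α) w ∧ ordCompl[p] w = 1) ∧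
      acmAtom (p ^ α) (b * p ^ α) (acmCarrier p b α (ordCompl[p] u * ordCompl[p] v)) ∧
      u * v = acmCarrier p b α (ordCompl[p] u * ordCompl[p] v) * t.prod := by
  obtain ⟨i₁, n₁, hi₁, hn₁, hc₁, rfl⟩ := (acmAtom_pow_iff hp hα hb1).mp hu
  obtain ⟨i₂, n₂, hi₂, hn₂, hc₂, rfl⟩ := (acmAtom_pow_iff hp hα hb1).mp hv
  rw [Nat.ordCompl_pow_mul_of_not_dvd _ hp hn₁, Nat.ordCompl_pow_mul_of_not_dvd _ hp hn₂]
  have hc : p ^ (i₁ + i₂) * (n₁ * n₂) ≡ 1 [MOD b] :=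
    calc p ^ (i₁ + i₂) * (n₁ * n₂) = p ^ i₁ * n₁ * (p ^ i₂ * n₂) := by ring
      _ ≡ 1 [MOD b] := hc₁.mul hc₂
  set j := minPowExp p b (n₁ * n₂)
  have hj : j ≤ i₁ + i₂ := minPowExp_le hc
  obtain ⟨t, ht₁, ht₂, htp, hprod⟩ := exists_pure_acmFactorization hp hb1
    (by omega : i₁ + i₂ - j < 2 * α) (pow_sub_minPowExp_modEq hc)
  refine ⟨t, ht₁, ht₂, htp, acmCarrier_atom hp hα hb1 (hp.not_dvd_mul hn₁ hn₂) hc, ?_⟩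
  have hexp : (α + i₁) + (α + i₂) = (α + j) + (α + (i₁ + i₂ - j)) := by omega
  calc p ^ (α + i₁) * n₁ * (p ^ (α + i₂) * n₂)
      = p ^ ((α + i₁) + (α + i₂)) * (n₁ * n₂) := by ring
    _ = acmCarrier p b α (n₁ * n₂) * t.prod := by rw [hexp, hprod, acmCarrier, pow_add]; ring

theorem exists_acmStep_merge (hp : p.Prime) (hα : 0 < α) (hb1 : p ^ α ≡ 1 [MOD b])
    {c : Multiset ℕ} (hz : acmFactorization (p ^ α) (b * p ^ α) x (u ::ₘ v ::ₘ c)) :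
    ∃ t : Multiset ℕ, 1 ≤ card t ∧ (∀ w ∈ t, ordCompl[p] w = 1) ∧
      acmStep (p ^ α) (b * p ^ α) x 3 (u ::ₘ v ::ₘ c)
        (acmCarrier p b α (ordCompl[p] u * ordCompl[p] v) ::ₘ (t + c)) := by
  obtain ⟨t, ht₁, ht₂, htp, hA, huv⟩ :=
    exists_mul_eq_acmCarrier_mul_prod hp hα hb1 (hz.1 u (by simp)) (hz.1 v (by simp))
  set A := acmCarrier p b α (ordCompl[p] u * ordCompl[p] v)
  refine ⟨t, ht₁, fun w hw => (htp w hw).2, hz, ⟨?_, ?_⟩, ?_⟩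
  · simp only [mem_cons, mem_add]
    rintro w (rfl | hw | hw)
    · exact hA
    · exact (htp w hw).1
    · exact hz.1 w (by simp [hw])
  · rw [← hz.2, prod_cons, prod_add, prod_cons, prod_cons, ← mul_assoc, ← mul_assoc, huv]
  · calc facDist (u ::ₘ v ::ₘ c) (A ::ₘ (t + c))
        = facDist ((u ::ₘ {v}) + c) ((A ::ₘ t) + c) := by simp only [cons_add, singleton_add]
      _ ≤ max (card (u ::ₘ {v})) (card (A ::ₘ t)) := facDist_add_right_le _ _ _
      _ ≤ 3 := by simp only [card_cons, card_singleton]; omega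

theorem exists_reflTransGen_acmCarrier_mem (hp : p.Prime) (hα : 0 < α)
    (hb1 : p ^ α ≡ 1 [MOD b]) {z : Multiset ℕ}
    (hz : acmFactorization (p ^ α) (b * p ^ α) x z) (hcard : 2 ≤ card z) :
    ∃ w, acmFactorization (p ^ α) (b * p ^ α) x w ∧
      acmCarrier p b α (ordCompl[p] x) ∈ w ∧
      ReflTransGen (acmStep (p ^ α) (b * p ^ α) x 3) z w := by
  induction hk : card (z.filter (ordCompl[p] · ≠ 1)) using Nat.strong_induction_on
    generalizing z with
  | _ k ih =>
  obtain ⟨u, v, c, rfl, hc⟩ := exists_eq_cons_cons_of_two_le (ordCompl[p] · ≠ 1) hcard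
  obtain ⟨t, ht, htp, hstep⟩ := exists_acmStep_merge hp hα hb1 hz
  set A := acmCarrier p b α (ordCompl[p] u * ordCompl[p] v) with hA_def
  -- Either the merged carrier is already that of `x`, or it absorbed two atoms with nontrivial
  -- `p`-free part and fewer such atoms are left.
  rcases hc with hc | ⟨hu, hv⟩
  · refine ⟨_, hstep.2.1, ?_, .single hstep⟩
    have hc1 : ordCompl[p] c.prod = 1 := Nat.ordCompl_prod_eq_one fun w hw => not_not.mp (hc w hw)
    rw [← hz.2, prod_cons, prod_cons, Nat.ordCompl_mul, Nat.ordCompl_mul, hc1, mul_one]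
    exact mem_cons_self _ _
  · have hu0 := (hz.1 u (by simp)).two_le
    have hv0 := (hz.1 v (by simp)).two_le
    have hA : ordCompl[p] A ≠ 1 := by
      rw [hA_def, acmCarrier, Nat.ordCompl_pow_mul_of_not_dvd _ hp
        (hp.not_dvd_mul (Nat.not_dvd_ordCompl hp (by omega)) (Nat.not_dvd_ordCompl hp (by omega)))]
      exact fun h => hu (mul_eq_one.mp h).1
    have htf : t.filter (ordCompl[p] · ≠ 1) = 0 :=
      filter_eq_nil.mpr fun w hw => not_not.mpr (htp w hw)
    have hlt : card ((A ::ₘ (t + c)).filter (ordCompl[p] · ≠ 1)) < k := by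
      have hP : ∀ {w} (s : Multiset ℕ), ordCompl[p] w ≠ 1 →
          (w ::ₘ s).filter (ordCompl[p] · ≠ 1) = w ::ₘ s.filter (ordCompl[p] · ≠ 1) :=
        fun s h => filter_cons_of_pos s h
      rw [← hk, hP _ hA, filter_add, htf, zero_add, hP _ hu, hP _ hv, card_cons, card_cons,
        card_cons]
      omega
    obtain ⟨w, hw, hAw, hr⟩ :=
      ih _ hlt hstep.2.1 (by simp only [card_cons, card_add]; omega) rfl
    exact ⟨w, hw, hAw, .head hstep hr⟩

theorem reflTransGen_acmStep_three (hp : p.Prime) (hα : 0 < α) (hb1 : p ^ α ≡ 1 [MOD b])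
    {z₁ z₂ : Multiset ℕ} (h₁ : acmFactorization (p ^ α) (b * p ^ α) x z₁)
    (h₂ : acmFactorization (p ^ α) (b * p ^ α) x z₂) :
    ReflTransGen (acmStep (p ^ α) (b * p ^ α) x 3) z₁ z₂ := by
  induction x using Nat.strong_induction_on generalizing z₁ z₂ with
  | _ x ih =>
  have hab := (Nat.mul_self_modEq_iff_modEq_one (pow_ne_zero α hp.ne_zero)).mpr hb1
  rcases le_or_gt (card z₁) 1 with hc₁ | hc₁
  · rw [h₁.eq_of_card_le_one hab hc₁ h₂]
  rcases le_or_gt (card z₂) 1 with hc₂ | hc₂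
  · rw [h₂.eq_of_card_le_one hab hc₂ h₁]
  obtain ⟨w₁, hw₁, hA₁, hr₁⟩ := exists_reflTransGen_acmCarrier_mem hp hα hb1 h₁ hc₁
  obtain ⟨w₂, hw₂, hA₂, hr₂⟩ := exists_reflTransGen_acmCarrier_mem hp hα hb1 h₂ hc₂
  obtain ⟨s₁, rfl⟩ := exists_cons_of_mem hA₁
  obtain ⟨s₂, rfl⟩ := exists_cons_of_mem hA₂
  have hA := hw₁.1 _ (mem_cons_self _ _)
  have hAx : _ ∣ x := hw₁.2 ▸ dvd_prod (mem_cons_self _ s₁)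
  have hmid := reflTransGen_acmStep_cons hA (Nat.mul_div_cancel' hAx)
    (ih _ (Nat.div_lt_self h₁.pos hA.two_le) hw₁.div_of_cons hw₂.div_of_cons)
  exact hr₁.trans (hmid.trans (symm_of _ hr₂))

theorem three_mem_acmCatSet (hp : p.Prime) (hα : 0 < α) (hb1 : p ^ α ≡ 1 [MOD b]) :
    3 ∈ acmCatSet (p ^ α) (b * p ^ α) :=
  fun _ _ _ _ h₁ h₂ => acmNChain_iff.mpr ⟨h₁, reflTransGen_acmStep_three hp hα hb1 h₁ h₂⟩

theorem exists_acmFactorization_card_ne (hp : p.Prime) (hpb : ¬ p ∣ b) (hα : 1 < α)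
    (hb1 : p ^ α ≡ 1 [MOD b]) :
    ∃ x z₁ z₂, acmFactorization (p ^ α) (b * p ^ α) x z₁ ∧
      acmFactorization (p ^ α) (b * p ^ α) x z₂ ∧ card z₁ ≠ card z₂ := by
  obtain ⟨γ, rfl⟩ : ∃ γ, α = γ + 2 := ⟨α - 2, by omega⟩
  have hq : ¬ p ∣ p + b := by rwa [Nat.dvd_add_right (dvd_refl p)]
  have hqp : p + b ≡ p [MOD b] := Nat.add_mod_right p b
  have hB : acmAtom (p ^ (γ + 2)) (b * p ^ (γ + 2)) (p ^ (γ + 2 + (γ + 1)) * (p + b)) :=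
    (acmAtom_pow_iff hp (by omega) hb1).mpr ⟨γ + 1, p + b, by omega, hq,
      (hqp.mul_left _).trans (by rwa [← pow_succ]), rfl⟩
  have hD : acmAtom (p ^ (γ + 2)) (b * p ^ (γ + 2)) (p ^ (γ + 2 + γ) * ((p + b) * (p + b))) :=
    (acmAtom_pow_iff hp (by omega) hb1).mpr ⟨γ, _, by omega, hp.not_dvd_mul hq hq,
      ((hqp.mul hqp).mul_left _).trans (by rwa [← mul_assoc, ← pow_succ, ← pow_succ]), rfl⟩
  have hA : acmAtom (p ^ (γ + 2)) (b * p ^ (γ + 2)) (p ^ (γ + 2 + 0)) :=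
    acmAtom_pow hp hb1 (by omega) rfl
  set B := p ^ (γ + 2 + (γ + 1)) * (p + b)
  set D := p ^ (γ + 2 + γ) * ((p + b) * (p + b))
  refine ⟨B * B, {B, B}, {p ^ (γ + 2 + 0), p ^ (γ + 2 + 0), D},
    ⟨by simp [hB], by simp⟩, ⟨by simp [hA, hD], ?_⟩, by simp⟩
  simp only [insert_eq_cons, prod_cons, prod_singleton]
  ring

end LocalACM

/-- The local singular ACM `M = M_{p^α, b p^α}` with `α = β > 1` has
catenary degree 3. -/
theorem local_catenary_alpha_eq_beta (p b α : ℕ) (hp : p.Prime) (hpb : ¬ p ∣ b)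
    (hα : 1 < α) (hacm : p ^ α * p ^ α ≡ p ^ α [MOD b * p ^ α]) :
    IsLeast (acmCatSet (p ^ α) (b * p ^ α)) 3 := by
  have hb1 : p ^ α ≡ 1 [MOD b] :=
    (Nat.mul_self_modEq_iff_modEq_one (pow_ne_zero α hp.ne_zero)).mp hacm
  obtain ⟨x, z₁, z₂, h₁, h₂, hne⟩ := exists_acmFactorization_card_ne hp hpb hα hb1
  exact ⟨three_mem_acmCatSet hp (by omega) hb1,
    fun N hN => three_le_of_mem_acmCatSet hacm h₁ h₂ hne hN⟩
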